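/- Let M be an MSC with events on processes p and q, intervals [e₁,e₁'], …, [e_k,e_k'] of events on p, and events f₁ < ⋯ < f_k on q such that for all i: Past_p(e_i) ⊆ Past_p(f_i) and Fut_p(e_i') ⊆ Fut_p(f_i) (so Par_p(f_i) ⊆ [e_i,e_i']). Suppose additionally that for all i and all process sequences 𝕡 from p to q, last_𝕡(f_i) ∉ [e_i,e_i'] whenever defined, and for all process sequences 𝕡 from q to p, first_𝕡(f_i) ∉ [e_i,e_i'] whenever defined. Then Par_p(f_i) = [e_i,e_i'] for all i. -/

import Mathlib

/-- A message sequence chart (MSC) over processes `P`, labels `A`, and event set `E`. -/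
structure MSC (P A E : Type) [Fintype E] where
  proc : E → P
  lbl : E → A
  pnext : E → E → Prop
  msg : E → E → Prop
  pnext_proc : ∀ {e f}, pnext e f → proc e = proc f
  pnext_succ_unique : ∀ {e f f'}, pnext e f → pnext e f' → f = f'
  pnext_pred_unique : ∀ {e e' f}, pnext e f → pnext e' f → e = e'
  msg_proc : ∀ {e f}, msg e f → proc e ≠ proc f
  msg_send_unique : ∀ {e f f'}, msg e f → msg e f' → f = f'
  msg_recv_unique : ∀ {e e' f}, msg e f → msg e' f → e = e'
  msg_not_send_recv : ∀ {e f g}, msg e f → ¬ msg g e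
  acyclic : ∀ e, ¬ Relation.TransGen (fun a b => pnext a b ∨ msg a b) e e
  proc_total : ∀ {e f}, proc e = proc f →
    Relation.ReflTransGen pnext e f ∨ Relation.ReflTransGen pnext f e
  fifo : ∀ {e e' f f'}, msg e f → msg e' f' → proc e = proc e' → proc f = proc f' →
    (Relation.ReflTransGen pnext e e' ↔ Relation.ReflTransGen pnext f f')

namespace MSC

variable {P A E : Type} [Fintype E]

/-- The edge relation `→proc ∪ →msg`. -/
def edge (M : MSC P A E) (e f : E) : Prop := M.pnext e f ∨ M.msg e f

/-- The partial order `≤ = (→proc ∪ →msg)*`. -/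
def le (M : MSC P A E) (e f : E) : Prop := Relation.ReflTransGen M.edge e f

/-- The strict order `< = (→proc ∪ →msg)⁺`. -/
def lt (M : MSC P A E) (e f : E) : Prop := Relation.TransGen M.edge e f

/-- `e ∥ f`: incomparability w.r.t. `≤`. -/
def par (M : MSC P A E) (e f : E) : Prop := ¬ M.le e f ∧ ¬ M.le f e

/-- `e ⋖ f`: strict order minus the direct process/message edges. -/
def cless (M : MSC P A E) (e f : E) : Prop := M.lt e f ∧ ¬ M.pnext e f ∧ ¬ M.msg e f

/-- The (reflexive) order along a single process: `→proc*`. -/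
def pord (M : MSC P A E) (e f : E) : Prop := Relation.ReflTransGen M.pnext e f

/-- `Past_p(f) = {g ∈ E_p : g < f}`. -/
def PastP (M : MSC P A E) (p : P) (f : E) : Set E := {g | M.proc g = p ∧ M.lt g f}

/-- `Fut_p(f) = {g ∈ E_p : f < g}`. -/
def FutP (M : MSC P A E) (p : P) (f : E) : Set E := {g | M.proc g = p ∧ M.lt f g}

/-- `Par_p(f) = {g ∈ E_p : g ∥ f}`. -/
def ParP (M : MSC P A E) (p : P) (f : E) : Set E := {g | M.proc g = p ∧ M.par g f}

/-- `S` is an interval of consecutive events on process `p`. -/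
def IsInterval (M : MSC P A E) (p : P) (S : Set E) : Prop :=
  (∀ e ∈ S, M.proc e = p) ∧
  ∀ e f g, e ∈ S → g ∈ S → M.pord e f → M.pord f g → f ∈ S

/-- The interval `[e,e'] = {g ∈ E_p : e ≤ g ≤ e'}` on process `p`. -/
def Intv (M : MSC P A E) (p : P) (e e' : E) : Set E :=
  {g | M.proc g = p ∧ M.pord e g ∧ M.pord g e'}

end MSC

/-- `e ≤_𝕡 f` for a process sequence `𝕡`. -/
def MSC.leSeq {P A E : Type} [Fintype E] (M : MSC P A E) : List P → E → E → Prop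
  | [], _, _ => False
  | [p], e, f => M.proc e = p ∧ M.pord e f
  | p :: ps, e, f => M.proc e = p ∧ ∃ g h, M.pord e g ∧ M.msg g h ∧ M.leSeq ps h f

/-! The inclusion `Par_p(f) ⊆ [e,e']` is the `Lint` hypothesis read through the totality of the
order on `p`. Conversely, if some `g ∈ [e,e']` were comparable with `f`, say `g ≤ f`, then
`g ≤_𝕡 f` for a repetition-free sequence `𝕡` from `p` to `q`, and `m = last_𝕡(f)` satisfies
`e ≤ g ≤ m ≤ f`; as `m ∉ [e,e']` this forces `e' < m`, hence `f < m` by `Fut_p(e') ⊆ Fut_p(f)`,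
a cycle. The case `f ≤ g` is symmetric, with `first_𝕡(f)`. -/

namespace MSC

variable {P A E : Type} [Fintype E] {M : MSC P A E} {a b e e' f g : E} {p q : P}

lemma proc_eq_of_pord (h : M.pord e f) : M.proc e = M.proc f := by
  induction h with
  | refl => rfl
  | tail _ hnext ih => exact ih.trans (M.pnext_proc hnext)

lemma le_of_pord (h : M.pord e f) : M.le e f := by
  induction h with
  | refl => exact .refl
  | tail _ hnext ih => exact ih.tail (Or.inl hnext)

lemma le_of_lt (h : M.lt e f) : M.le e f := h.to_reflTransGen

lemma lt_of_pord_of_ne (h : M.pord e f) (hne : e ≠ f) : M.lt e f :=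
  (Relation.reflTransGen_iff_eq_or_transGen.mp (le_of_pord h)).resolve_left hne.symm

lemma lt_irrefl (e : E) : ¬ M.lt e e := M.acyclic e

lemma not_lt_of_le (h : M.le e f) : ¬ M.lt f e := fun h' => M.lt_irrefl f (h'.trans_left h)

lemma lt_of_not_pord (h : M.proc e = M.proc f) (hn : ¬ M.pord e f) : M.lt f e := by
  refine (M.proc_total h).elim (absurd · hn) fun hfe => lt_of_pord_of_ne hfe ?_
  rintro rfl
  exact hn Relation.ReflTransGen.refl

lemma pord_of_not_lt (h : M.proc e = M.proc f) (hn : ¬ M.lt f e) : M.pord e f :=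
  by_contra fun hn' => hn (lt_of_not_pord h hn')

lemma pord_of_le (h : M.proc e = M.proc f) (hle : M.le e f) : M.pord e f :=
  pord_of_not_lt h (not_lt_of_le hle)

lemma wellFounded_lt : WellFounded M.lt :=
  haveI : IsTrans E M.lt := ⟨fun _ _ _ => Relation.TransGen.trans⟩
  haveI : Std.Irrefl M.lt := ⟨M.lt_irrefl⟩
  Finite.wellFounded_of_trans_of_irrefl _

lemma wellFounded_lt_swap : WellFounded (Function.swap M.lt) :=
  haveI : IsTrans E (Function.swap M.lt) := ⟨fun _ _ _ h h' => Relation.TransGen.trans h' h⟩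
  haveI : Std.Irrefl (Function.swap M.lt) := ⟨M.lt_irrefl⟩
  Finite.wellFounded_of_trans_of_irrefl _

section ProcessSequence

variable {ps l₁ l₂ : List P}

lemma leSeq_cons_of_ne_nil (hps : ps ≠ []) :
    M.leSeq (p :: ps) e f ↔
      M.proc e = p ∧ ∃ g h, M.pord e g ∧ M.msg g h ∧ M.leSeq ps h f := by
  cases ps with
  | nil => exact absurd rfl hps
  | cons _ _ => rfl

lemma head?_eq_of_leSeq (h : M.leSeq ps e f) : ps.head? = some (M.proc e) := by
  match ps, h with
  | [_], h => simp [h.1]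
  | _ :: _ :: _, h => simp [h.1]

lemma getLast?_eq_of_leSeq (h : M.leSeq ps e f) : ps.getLast? = some (M.proc f) := by
  induction ps generalizing e with
  | nil => exact h.elim
  | cons r t ih =>
    match t, h with
    | [], ⟨hr, hef⟩ => simp [← hr, proc_eq_of_pord hef]
    | _ :: _, ⟨_, _, _, _, _, hrest⟩ => rw [List.getLast?_cons_cons]; exact ih hrest

lemma le_of_leSeq (h : M.leSeq ps e f) : M.le e f := by
  induction ps generalizing e with
  | nil => exact h.elim
  | cons r t ih =>
    match t, h with
    | [], ⟨_, hef⟩ => exact le_of_pord hef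
    | _ :: _, ⟨_, _, _, hg, hmsg, hrest⟩ =>
      exact ((le_of_pord hg).tail (Or.inr hmsg)).trans (ih hrest)

lemma leSeq_of_pord_left (hab : M.pord a b) (h : M.leSeq ps b f) : M.leSeq ps a f := by
  match ps, h with
  | [_], ⟨hb, hbf⟩ => exact ⟨(proc_eq_of_pord hab).trans hb, hab.trans hbf⟩
  | _ :: _ :: _, ⟨hb, g, h, hbg, hmsg, hrest⟩ =>
    exact ⟨(proc_eq_of_pord hab).trans hb, g, h, hab.trans hbg, hmsg, hrest⟩

lemma exists_le_leSeq_of_leSeq_append (hl₂ : l₂ ≠ []) (h : M.leSeq (l₁ ++ l₂) e f) :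
    ∃ y, M.le e y ∧ M.leSeq l₂ y f := by
  induction l₁ generalizing e with
  | nil => exact ⟨e, Relation.ReflTransGen.refl, h⟩
  | cons r t ih =>
    rw [List.cons_append, leSeq_cons_of_ne_nil (by simp [hl₂])] at h
    obtain ⟨_, g, h, hg, hmsg, hrest⟩ := h
    obtain ⟨y, hy, hyf⟩ := ih hrest
    exact ⟨y, ((le_of_pord hg).tail (Or.inr hmsg)).trans hy, hyf⟩

/-- Prepending a message `a → b` to a sequence witnessing `b ≤_𝕡 f`; if `proc a` already occurs
in `𝕡`, the detour is cut off at that occurrence, which keeps the sequence repetition-free. -/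
lemma exists_nodup_leSeq_of_le (h : M.le e f) :
    ∃ ps : List P, ps.Nodup ∧ ps.head? = some (M.proc e) ∧
      ps.getLast? = some (M.proc f) ∧ M.leSeq ps e f := by
  induction h using Relation.ReflTransGen.head_induction_on with
  | refl => exact ⟨[M.proc f], by simp, by simp, by simp, rfl, Relation.ReflTransGen.refl⟩
  | @head a b hedge _ ih =>
    obtain ⟨ps, hnd, hhd, hlast, hseq⟩ := ih
    rcases hedge with hnext | hmsg
    · refine ⟨ps, hnd, ?_, hlast, leSeq_of_pord_left (.single hnext) hseq⟩
      rw [hhd, M.pnext_proc hnext]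
    by_cases hmem : M.proc a ∈ ps
    · obtain ⟨s, t, rfl⟩ := List.mem_iff_append.mp hmem
      obtain ⟨y, hby, hy⟩ := exists_le_leSeq_of_leSeq_append (by simp) hseq
      have hay : M.pord a y := by
        refine pord_of_le ?_ ((show M.le a b from .single (Or.inr hmsg)).trans hby)
        simpa using head?_eq_of_leSeq hy
      refine ⟨M.proc a :: t, (List.nodup_append.mp hnd).2.1, by simp, ?_,
        leSeq_of_pord_left hay hy⟩
      rw [← hlast, List.getLast?_append, Option.or_of_isSome (by simp)]
    · have hps : ps ≠ [] := by rintro rfl; simp at hhd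
      refine ⟨M.proc a :: ps, List.nodup_cons.mpr ⟨hmem, hnd⟩, rfl, ?_,
        (leSeq_cons_of_ne_nil hps).mpr ⟨rfl, a, b, .refl, hmsg, hseq⟩⟩
      obtain ⟨u, v, rfl⟩ := List.exists_cons_of_ne_nil hps
      rwa [List.getLast?_cons_cons]

lemma exists_last (hg : M.leSeq ps g f) :
    ∃ m, M.leSeq ps m f ∧ ∀ h, M.leSeq ps h f → M.pord h m := by
  obtain ⟨m, hm, hmax⟩ := wellFounded_lt_swap.has_min {h | M.leSeq ps h f} ⟨g, hg⟩
  refine ⟨m, hm, fun h hh => pord_of_not_lt ?_ (hmax h hh)⟩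
  simpa [head?_eq_of_leSeq hm] using (head?_eq_of_leSeq hh).symm

lemma exists_first (hg : M.leSeq ps f g) :
    ∃ m, M.leSeq ps f m ∧ ∀ h, M.leSeq ps f h → M.pord m h := by
  obtain ⟨m, hm, hmin⟩ := wellFounded_lt.has_min {h | M.leSeq ps f h} ⟨g, hg⟩
  refine ⟨m, hm, fun h hh => pord_of_not_lt ?_ (hmin h hh)⟩
  simpa [getLast?_eq_of_leSeq hm] using getLast?_eq_of_leSeq hh

end ProcessSequence

lemma parP_subset_intv (he : M.proc e = p) (he' : M.proc e' = p)
    (hpast : M.PastP p e ⊆ M.PastP p f) (hfut : M.FutP p e' ⊆ M.FutP p f) :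
    M.ParP p f ⊆ M.Intv p e e' := by
  rintro g ⟨hg, hgf, hfg⟩
  refine ⟨hg, by_contra fun hn => hgf ?_, by_contra fun hn => hfg ?_⟩
  · exact le_of_lt (hpast ⟨hg, lt_of_not_pord (he.trans hg.symm) hn⟩).2
  · exact le_of_lt (hfut ⟨hg, lt_of_not_pord (hg.trans he'.symm) hn⟩).2

lemma not_le_of_mem_intv_of_last (he' : M.proc e' = p) (hf : M.proc f = q)
    (hfut : M.FutP p e' ⊆ M.FutP p f)
    (hlast : ∀ ps : List P, ps.Nodup → ps.head? = some p → ps.getLast? = some q →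
      ∀ g, M.leSeq ps g f → (∀ h, M.leSeq ps h f → M.pord h g) → g ∉ M.Intv p e e')
    (hg : g ∈ M.Intv p e e') : ¬ M.le g f := by
  intro hgf
  obtain ⟨ps, hnd, hhd, hlast', hseq⟩ := exists_nodup_leSeq_of_le hgf
  obtain ⟨m, hm, hmax⟩ := exists_last hseq
  have hmp : M.proc m = p := by simpa [head?_eq_of_leSeq hm] using hhd.trans (congrArg _ hg.1)
  have hnm := hlast ps hnd (hg.1 ▸ hhd) (hf ▸ hlast') m hm hmax
  have he'm : M.lt e' m :=
    lt_of_not_pord (hmp.trans he'.symm) fun hme' => hnm ⟨hmp, hg.2.1.trans (hmax g hseq), hme'⟩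
  exact not_lt_of_le (le_of_leSeq hm) (hfut ⟨hmp, he'm⟩).2

lemma not_ge_of_mem_intv_of_first (he : M.proc e = p) (hf : M.proc f = q)
    (hpast : M.PastP p e ⊆ M.PastP p f)
    (hfirst : ∀ ps : List P, ps.Nodup → ps.head? = some q → ps.getLast? = some p →
      ∀ g, M.leSeq ps f g → (∀ h, M.leSeq ps f h → M.pord g h) → g ∉ M.Intv p e e')
    (hg : g ∈ M.Intv p e e') : ¬ M.le f g := by
  intro hfg
  obtain ⟨ps, hnd, hhd, hlast', hseq⟩ := exists_nodup_leSeq_of_le hfg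
  obtain ⟨m, hm, hmin⟩ := exists_first hseq
  have hmp : M.proc m = p := by
    simpa [getLast?_eq_of_leSeq hm] using hlast'.trans (congrArg _ hg.1)
  have hnm := hfirst ps hnd (hf ▸ hhd) (hg.1 ▸ hlast') m hm hmin
  have hme : M.lt m e :=
    lt_of_not_pord (he.trans hmp.symm) fun hem => hnm ⟨hmp, hem, (hmin g hseq).trans hg.2.2⟩
  exact not_lt_of_le (le_of_leSeq hm) (hpast ⟨hmp, hme⟩).2

end MSC

theorem stmt10_general {P A E : Type} [Fintype E] (M : MSC P A E) (p q : P)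
    (k : ℕ) (e e' f : Fin k → E)
    (hep : ∀ i, M.proc (e i) = p) (he'p : ∀ i, M.proc (e' i) = p)
    (hfq : ∀ i, M.proc (f i) = q)
    (hpast : ∀ i, M.PastP p (e i) ⊆ M.PastP p (f i))
    (hfut : ∀ i, M.FutP p (e' i) ⊆ M.FutP p (f i))
    (hlast : ∀ i (ps : List P), ps.Nodup → ps.head? = some p → ps.getLast? = some q →
      ∀ g, M.leSeq ps g (f i) → (∀ h, M.leSeq ps h (f i) → M.pord h g) →
        g ∉ M.Intv p (e i) (e' i))
    (hfirst : ∀ i (ps : List P), ps.Nodup → ps.head? = some q → ps.getLast? = some p →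
      ∀ g, M.leSeq ps (f i) g → (∀ h, M.leSeq ps (f i) h → M.pord g h) →
        g ∉ M.Intv p (e i) (e' i)) :
    ∀ i, M.ParP p (f i) = M.Intv p (e i) (e' i) := by
  intro i
  refine (MSC.parP_subset_intv (hep i) (he'p i) (hpast i) (hfut i)).antisymm fun g hg => ?_
  exact ⟨hg.1, MSC.not_le_of_mem_intv_of_last (he'p i) (hfq i) (hfut i) (hlast i) hg,
    MSC.not_ge_of_mem_intv_of_first (hep i) (hfq i) (hpast i) (hfirst i) hg⟩

/-- under the `Lint` conditions plus the `last`/`first`-avoidance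
conditions, `Par_p(f_i) = [e_i, e_i']` for all `i`. -/
theorem stmt10 {P A E : Type} [Fintype E] (M : MSC P A E) (p q : P) (hpq : p ≠ q)
    (k : ℕ) (e e' f : Fin k → E)
    (hep : ∀ i, M.proc (e i) = p) (he'p : ∀ i, M.proc (e' i) = p)
    (hee' : ∀ i, M.pord (e i) (e' i))
    (hfq : ∀ i, M.proc (f i) = q)
    (hmono : ∀ i j, i < j → M.lt (f i) (f j))
    (hpast : ∀ i, M.PastP p (e i) ⊆ M.PastP p (f i))
    (hfut : ∀ i, M.FutP p (e' i) ⊆ M.FutP p (f i))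
    (hlast : ∀ i (ps : List P), ps.Nodup → ps.head? = some p → ps.getLast? = some q →
      ∀ g, M.leSeq ps g (f i) → (∀ h, M.leSeq ps h (f i) → M.pord h g) →
        g ∉ M.Intv p (e i) (e' i))
    (hfirst : ∀ i (ps : List P), ps.Nodup → ps.head? = some q → ps.getLast? = some p →
      ∀ g, M.leSeq ps (f i) g → (∀ h, M.leSeq ps (f i) h → M.pord g h) →
        g ∉ M.Intv p (e i) (e' i)) :
    ∀ i, M.ParP p (f i) = M.Intv p (e i) (e' i) :=
  stmt10_general M p q k e e' f hep he'p hfq hpast hfut hlast hfirst
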